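/- arXiv:2305.00689 — 2 statements merged into one kernel-verified Lean document; each statement's English description precedes it below -/
import Mathlib

section
/- Let H_Z : F_2^n → F_2^{n_Z}, H : F_2^t → F_2^s with H surjective (independent checks), and suppose the code ker(H_Z) has soundness ρ_Z, i.e., |H_Z u|/n_Z ≥ ρ_Z |u − z|/n for the closest z ∈ ker H_Z. Consider the map ∂_2ᵀ : (F_2^n ⊗ F_2^t) ⊕ (F_2^{n_X} ⊗ F_2^s) → (F_2^{n_Z} ⊗ F_2^t) ⊕ (F_2^n ⊗ F_2^s) given by ∂_2ᵀ(α, β) = (H_Z ⊗ I)(α) ⊕ ((I ⊗ H)(α) + (H_Xᵀ ⊗ I)(β)) arising from the homological product of a CSS chain complex with the cocomplex of H. Then the code with parity-check matrix ∂_2ᵀ has soundness at least (1/(s+1))·min(n_Z ρ_Z / n, 1)·(nt + n_X s)/(n_Z t + n s). -/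
open Matrix

/-- Hamming distance from a word to the kernel of a parity-check matrix. -/
noncomputable def distToKer {α β : Type*} [Fintype α] [Fintype β]
    (M : Matrix β α (ZMod 2)) (x : α → ZMod 2) : ℕ :=
  sInf (hammingDist x '' {y | M.mulVec y = 0})

/-- The coboundary map `∂₂ᵀ : C₁ → C₂` of the homological product of the CSS chain complex
`(H_Zᵀ, H_X)` with the cocomplex of the classical code `H`, written as a matrix:
`∂₂ᵀ(α, β) = ((H_Z ⊗ I) α, (I ⊗ H) α + (H_Xᵀ ⊗ I) β)`. -/
def d2T {Q X Z S T : Type*} (HX : Matrix X Q (ZMod 2)) (HZ : Matrix Z Q (ZMod 2))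
    (H : Matrix S T (ZMod 2)) [DecidableEq T] [DecidableEq Q] [DecidableEq S] :
    Matrix ((Z × T) ⊕ (Q × S)) ((Q × T) ⊕ (X × S)) (ZMod 2) :=
  Matrix.of fun r c =>
    match r, c with
    | Sum.inl (i, j), Sum.inl (p, j') => if j = j' then HZ i p else 0
    | Sum.inl _, Sum.inr _ => 0
    | Sum.inr (p, q), Sum.inl (p', j) => if p = p' then H q j else 0
    | Sum.inr (p, q), Sum.inr (r, q') => if q = q' then HX r p else 0

/-!
Write `x = (A, B)` with `A : Matrix T Q` (so `A j` is the `j`-th slice of `F₂^Q ⊗ F₂^T`) and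
`B : Matrix S X`. Replace each slice `A j` by a nearest codeword `Y j ∈ ker H_Z`. The leftover
syndrome `σ = H Y + B H_X` has rows in `ker H_Z` because `H_X H_Zᵀ = 0`, and independence of the
rows of `H` gives a right inverse `K` whose outputs are supported on `s` fixed coordinates; then
`(Y + K σ, B)` is a codeword of `∂₂ᵀ`. A column of `σ` can only be nonzero where a column of the
`(I ⊗ H)`-syndrome of `x` or of `Y - A` is, and it costs at most `s` flips, so
`d(x, ker ∂₂ᵀ) ≤ (s + 1) (∑ⱼ d(A j, ker H_Z) + |σ_Q|)`. Soundness of `H_Z`, slice by slice, bounds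
the sum by the `(H_Z ⊗ I)`-syndrome.
-/

section Hamming

variable {ι κ R : Type*} [Fintype ι] [Fintype κ] [DecidableEq R]

theorem hammingNorm_eq_sum_ite [Zero R] (x : ι → R) :
    hammingNorm x = ∑ i, if x i = 0 then 0 else 1 := by
  rw [hammingNorm, Finset.card_filter]
  exact Finset.sum_congr rfl fun i _ => by by_cases h : x i = 0 <;> simp [h]

theorem hammingDist_sum_elim (f f' : ι → R) (g g' : κ → R) :
    hammingDist (Sum.elim f g) (Sum.elim f' g') = hammingDist f f' + hammingDist g g' := by
  simp only [hammingDist, Finset.card_filter, Fintype.sum_sum_type, Sum.elim_inl, Sum.elim_inr]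
  rfl -- the two sides differ only in their `Decidable` instances

theorem hammingNorm_sum_elim [Zero R] (f : ι → R) (g : κ → R) :
    hammingNorm (Sum.elim f g) = hammingNorm f + hammingNorm g := by
  simpa [Sum.elim_zero_zero] using hammingDist_sum_elim f 0 g 0

theorem hammingNorm_add_le [AddZeroClass R] (x y : ι → R) :
    hammingNorm (x + y) ≤ hammingNorm x + hammingNorm y := by
  classical
  refine (Finset.card_le_card fun i hi => ?_).trans (Finset.card_union_le _ _)
  by_contra h
  simp_all

theorem Matrix.hammingNorm_vec [Zero R] (A : Matrix ι κ R) :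
    hammingNorm A.vec = ∑ i, hammingNorm (A i) := by
  simp only [hammingNorm_eq_sum_ite, Fintype.sum_prod_type, vec]
  exact Finset.sum_comm

theorem Matrix.hammingNorm_vec_eq_sum_transpose [Zero R] (A : Matrix ι κ R) :
    hammingNorm A.vec = ∑ j, hammingNorm (Aᵀ j) := by
  simp only [hammingNorm_eq_sum_ite, Fintype.sum_prod_type, vec, transpose_apply]
  rfl -- the two sides differ only in their `Decidable` instances

variable [NonUnitalNonAssocSemiring R] {K : Matrix ι κ R} {w : ℕ}
  {μ ν : Type*} [Fintype μ] [Fintype ν]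

theorem Matrix.hammingNorm_mulVec_add_mulVec_le (hK : ∀ v, hammingNorm (K *ᵥ v) ≤ w)
    (G : Matrix κ μ R) (u : κ → R) (v : μ → R) :
    hammingNorm (K *ᵥ (u + G *ᵥ v)) ≤ w * (hammingNorm u + hammingNorm v) := by
  by_cases huv : u = 0 ∧ v = 0
  · simp [huv.1, huv.2]
  · calc hammingNorm (K *ᵥ (u + G *ᵥ v)) ≤ w := hK _
      _ ≤ w * (hammingNorm u + hammingNorm v) := by
          refine Nat.le_mul_of_pos_right w ?_
          rw [not_and_or, ← ne_eq, ← ne_eq, ← hammingNorm_ne_zero_iff,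
            ← hammingNorm_ne_zero_iff] at huv
          omega

theorem Matrix.hammingNorm_vec_mul_add_mul_le (hK : ∀ v, hammingNorm (K *ᵥ v) ≤ w)
    (G : Matrix κ μ R) (U : Matrix κ ν R) (E : Matrix μ ν R) :
    hammingNorm (K * (U + G * E)).vec ≤ w * (hammingNorm U.vec + hammingNorm E.vec) := by
  simp only [hammingNorm_vec_eq_sum_transpose, ← Finset.sum_add_distrib, Finset.mul_sum]
  refine Finset.sum_le_sum fun p _ => ?_
  have hcol : (K * (U + G * E))ᵀ p = K *ᵥ (Uᵀ p + G *ᵥ Eᵀ p) := by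
    ext j
    simp [mul_apply, mulVec, dotProduct, Finset.mul_sum, mul_add, Finset.sum_add_distrib]
  rw [hcol]
  exact hammingNorm_mulVec_add_mulVec_le hK G _ _

end Hamming

section RightInverse

variable {R S T : Type*} [Field R] [Fintype S] [Fintype T]

theorem Matrix.span_range_col_eq_top (H : Matrix S T R) (hH : LinearIndependent R H.row) :
    Submodule.span R (Set.range H.col) = ⊤ := by
  apply Submodule.eq_top_of_finrank_eq
  rw [← H.rank_eq_finrank_span_cols, H.rank_eq_finrank_span_row, finrank_span_eq_card hH,
    Module.finrank_fintype_fun_eq_card]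

theorem Matrix.hammingNorm_one_submatrix_mulVec_le [DecidableEq R] [DecidableEq T]
    {κ : Type*} [Fintype κ] (a : κ → T) (v : κ → R) :
    hammingNorm ((1 : Matrix T T R).submatrix id a *ᵥ v) ≤ Fintype.card κ := by
  calc hammingNorm _ ≤ (Finset.univ.image a).card := by
        refine Finset.card_le_card fun τ hτ => ?_
        by_contra h
        simp only [Finset.mem_image, Finset.mem_univ, true_and, not_exists] at h
        exact (Finset.mem_filter.mp hτ).2 (Finset.sum_eq_zero fun k _ => by simp [Ne.symm (h k)])
    _ ≤ Fintype.card κ := Finset.card_image_le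

/-- The right inverse is supported on a set of columns of `H` forming a basis of `R^S`. -/
theorem Matrix.exists_mul_eq_one_hammingNorm_mulVec_le [DecidableEq R] [DecidableEq S]
    [DecidableEq T] (H : Matrix S T R) (hH : LinearIndependent R H) :
    ∃ K : Matrix T S R, H * K = 1 ∧ ∀ v, hammingNorm (K *ᵥ v) ≤ Fintype.card S := by
  obtain ⟨κ, a, ha, hspan, hli⟩ := exists_linearIndependent' R H.col
  have : Fintype κ := Fintype.ofInjective a ha
  let b := Module.Basis.mk hli (hspan.trans (H.span_range_col_eq_top hH)).ge
  refine ⟨(1 : Matrix T T R).submatrix id a * b.toMatrix (Pi.basisFun R S), ?_, fun v => ?_⟩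
  · have hsub : H * (1 : Matrix T T R).submatrix id a = (Pi.basisFun R S).toMatrix b := by
      rw [show H * (1 : Matrix T T R).submatrix id a = H.submatrix id a by
        simpa using mul_submatrix_one (Equiv.refl T) a H]
      ext q k
      simp [b, Module.Basis.toMatrix_apply]
    rw [← Matrix.mul_assoc, hsub, Module.Basis.toMatrix_mul_toMatrix_flip]
  · rw [← mulVec_mulVec, ← Module.finrank_fintype_fun_eq_card (R := R),
      Module.finrank_eq_card_basis b]
    exact hammingNorm_one_submatrix_mulVec_le a _

end RightInverse

section DistToKer

variable {α β : Type*} [Fintype α] [Fintype β]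

theorem distToKer_le_hammingDist (M : Matrix β α (ZMod 2)) (x : α → ZMod 2) {y : α → ZMod 2}
    (hy : M *ᵥ y = 0) : distToKer M x ≤ hammingDist x y :=
  Nat.sInf_le ⟨y, hy, rfl⟩

theorem exists_mulVec_eq_zero_distToKer_eq (M : Matrix β α (ZMod 2)) (x : α → ZMod 2) :
    ∃ y, M *ᵥ y = 0 ∧ distToKer M x = hammingDist x y := by
  obtain ⟨y, hy, hxy⟩ := Nat.sInf_mem (⟨_, 0, mulVec_zero M, rfl⟩ :
    (hammingDist x '' {y | M *ᵥ y = 0}).Nonempty)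
  exact ⟨y, hy, hxy.symm⟩

theorem mul_sum_distToKer_le_hammingNorm_vec {T : Type*} [Fintype T] {M : Matrix β α (ZMod 2)}
    {c : ℝ} (hM : ∀ u, c * distToKer M u ≤ hammingNorm (M *ᵥ u)) (A : Matrix T α (ZMod 2)) :
    c * ∑ j, (distToKer M (A j) : ℝ) ≤ hammingNorm (A * Mᵀ).vec := by
  rw [hammingNorm_vec, Nat.cast_sum, Finset.mul_sum]
  refine Finset.sum_le_sum fun j _ => ?_
  rw [show (A * Mᵀ) j = M *ᵥ A j from vecMul_transpose M (A j)]
  exact hM (A j)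

end DistToKer

section Product

variable {Q X Z S T : Type*} [Fintype Q] [Fintype X] [Fintype S] [Fintype T]
  [DecidableEq Q] [DecidableEq S] [DecidableEq T]
  (HX : Matrix X Q (ZMod 2)) (HZ : Matrix Z Q (ZMod 2)) (H : Matrix S T (ZMod 2))

theorem d2T_mulVec_sum_elim_vec (A : Matrix T Q (ZMod 2)) (B : Matrix S X (ZMod 2)) :
    d2T HX HZ H *ᵥ Sum.elim A.vec B.vec = Sum.elim (A * HZᵀ).vec (H * A + B * HX).vec := by
  ext (⟨i, j⟩ | ⟨p, q⟩) <;>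
    simp [d2T, vec, mulVec, dotProduct, Fintype.sum_sum_type, Fintype.sum_prod_type, mul_apply,
      Finset.sum_ite_eq, mul_comm]

theorem d2T_mulVec_sum_elim_vec_eq_zero {A : Matrix T Q (ZMod 2)} {B : Matrix S X (ZMod 2)}
    (hA : A * HZᵀ = 0) (hAB : H * A + B * HX = 0) :
    d2T HX HZ H *ᵥ Sum.elim A.vec B.vec = 0 := by
  rw [d2T_mulVec_sum_elim_vec, hA, hAB, vec_zero, vec_zero, Sum.elim_zero_zero]

theorem d2T_mulVec_sum_elim_add_mul_eq_zero (hchain : HX * HZᵀ = 0) {K : Matrix T S (ZMod 2)}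
    (hHK : H * K = 1) {Y : Matrix T Q (ZMod 2)} (hY : Y * HZᵀ = 0) (B : Matrix S X (ZMod 2)) :
    d2T HX HZ H *ᵥ Sum.elim (Y + K * (H * Y + B * HX)).vec B.vec = 0 := by
  refine d2T_mulVec_sum_elim_vec_eq_zero HX HZ H ?_ ?_
  · rw [Matrix.add_mul, Matrix.mul_assoc, Matrix.add_mul, Matrix.mul_assoc, Matrix.mul_assoc B,
      hY, hchain]
    simp
  · rw [Matrix.mul_add, ← Matrix.mul_assoc, hHK, Matrix.one_mul, add_right_comm, add_comm (H * Y),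
      ← two_smul (ZMod 2), show (2 : ZMod 2) = 0 from rfl, zero_smul]

theorem distToKer_d2T_sum_elim_vec_le [Fintype Z] (hchain : HX * HZᵀ = 0)
    {K : Matrix T S (ZMod 2)} (hHK : H * K = 1) {w : ℕ} (hK : ∀ v, hammingNorm (K *ᵥ v) ≤ w)
    (A : Matrix T Q (ZMod 2)) (B : Matrix S X (ZMod 2)) :
    distToKer (d2T HX HZ H) (Sum.elim A.vec B.vec) ≤
      (w + 1) * (∑ j, distToKer HZ (A j) + hammingNorm (H * A + B * HX).vec) := by
  obtain ⟨Y, hY, hAY⟩ : ∃ Y : Matrix T Q (ZMod 2),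
      (∀ j, HZ *ᵥ Y j = 0) ∧ ∀ j, distToKer HZ (A j) = hammingDist (A j) (Y j) := by
    choose Y hY hAY using fun j => exists_mulVec_eq_zero_distToKer_eq HZ (A j)
    exact ⟨Y, hY, hAY⟩
  have hYker : Y * HZᵀ = 0 := funext fun j => (vecMul_transpose HZ (Y j)).trans (hY j)
  have hdist : ∑ j, distToKer HZ (A j) = hammingNorm (Y - A).vec := by
    rw [hammingNorm_vec]
    refine Finset.sum_congr rfl fun j _ => ?_
    rw [hAY, hammingDist_eq_hammingNorm, neg_add_eq_sub]
    rfl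
  have hσ : H * Y + B * HX = (H * A + B * HX) + H * (Y - A) := by
    rw [Matrix.mul_sub]
    abel
  calc distToKer (d2T HX HZ H) (Sum.elim A.vec B.vec)
      ≤ hammingDist (Sum.elim A.vec B.vec) (Sum.elim (Y + K * (H * Y + B * HX)).vec B.vec) :=
        distToKer_le_hammingDist _ _
          (d2T_mulVec_sum_elim_add_mul_eq_zero HX HZ H hchain hHK hYker B)
    _ = hammingNorm ((Y - A) + K * (H * Y + B * HX)).vec := by
        rw [hammingDist_sum_elim, hammingDist_self, add_zero, hammingDist_eq_hammingNorm,
          ← vec_neg, ← vec_add]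
        congr 2
        abel
    _ ≤ hammingNorm (Y - A).vec +
          w * (hammingNorm (H * A + B * HX).vec + hammingNorm (Y - A).vec) := by
        rw [vec_add, hσ]
        grw [hammingNorm_add_le, hammingNorm_vec_mul_add_mul_le hK H]
    _ ≤ (w + 1) * (∑ j, distToKer HZ (A j) + hammingNorm (H * A + B * HX).vec) := by
        rw [hdist]
        nlinarith

end Product

theorem mul_div_mul_le_of_mul_div_le_div {a b c d ρ : ℝ} (ha : 0 ≤ a) (hb : 0 ≤ b) (hd : 0 ≤ d)
    (h : ρ * c / d ≤ a / b) : b * ρ / d * c ≤ a := by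
  rcases hb.eq_or_lt with rfl | hb
  · simpa using ha
  rcases hd.eq_or_lt with rfl | hd
  · simpa using ha
  rw [div_le_div_iff₀ hd hb] at h
  rw [div_mul_eq_mul_div, div_le_iff₀ hd]
  linarith

theorem one_div_mul_mul_div_mul_div_le_div {w d e m k N M : ℝ} (hk : 0 < k) (hN : 0 ≤ N)
    (hw : 0 ≤ w) (hd : 0 ≤ d) (hde : d ≤ k * e) (hem : m * e ≤ w) :
    1 / k * m * (M / N) * d / M ≤ w / N := by
  have hmd : m * d ≤ k * w := by
    rcases le_or_gt m 0 with hm | hm <;> nlinarith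
  rcases eq_or_ne M 0 with rfl | hM
  · simpa using div_nonneg hw hN
  rcases hN.eq_or_lt with rfl | hN
  · simp
  field_simp
  exact hmd

/-- Lemma 3 (soundness of the X-operators): if `H_Z` has soundness `ρ_Z` and the classical
parity-check matrix `H` has independent checks, then the code with parity-check matrix
`∂₂ᵀ` has soundness at least `(1/(s+1)) · min(n_Z ρ_Z / n, 1) · (nt + n_X s)/(n_Z t + n s)`. -/
theorem stmt9 (n nX nZ s t : ℕ)
    (HX : Matrix (Fin nX) (Fin n) (ZMod 2)) (HZ : Matrix (Fin nZ) (Fin n) (ZMod 2))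
    (H : Matrix (Fin s) (Fin t) (ZMod 2))
    (hchain : HX * HZ.transpose = 0)
    (hind : LinearIndependent (ZMod 2) (fun i : Fin s => H i))
    (ρZ : ℝ)
    (hsound : ∀ u : Fin n → ZMod 2,
      (hammingNorm (HZ.mulVec u) : ℝ) / nZ ≥ ρZ * (distToKer HZ u : ℝ) / n) :
    ∀ x : (Fin n × Fin t) ⊕ (Fin nX × Fin s) → ZMod 2,
      (hammingNorm ((d2T HX HZ H).mulVec x) : ℝ) / ((nZ * t + n * s : ℕ) : ℝ) ≥
        (1 / ((s : ℝ) + 1) * min ((nZ : ℝ) * ρZ / n) 1 *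
            (((n * t + nX * s : ℕ) : ℝ) / ((nZ * t + n * s : ℕ) : ℝ))) *
          (distToKer (d2T HX HZ H) x : ℝ) / ((n * t + nX * s : ℕ) : ℝ) := by
  intro x
  obtain ⟨A, hA⟩ := vec_bijective.2 (x ∘ Sum.inl)
  obtain ⟨B, hB⟩ := vec_bijective.2 (x ∘ Sum.inr)
  rw [← Sum.elim_comp_inl_inr x, ← hA, ← hB, d2T_mulVec_sum_elim_vec, hammingNorm_sum_elim]
  obtain ⟨K, hHK, hK⟩ := H.exists_mul_eq_one_hammingNorm_mulVec_le hind
  rw [Fintype.card_fin] at hK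
  have hsoundZ : ∀ u, min ((nZ : ℝ) * ρZ / n) 1 * distToKer HZ u ≤ hammingNorm (HZ *ᵥ u) :=
    fun u => (mul_le_mul_of_nonneg_right (min_le_left _ _) (Nat.cast_nonneg _)).trans
      (mul_div_mul_le_of_mul_div_le_div (by positivity) (by positivity) (by positivity) (hsound u))
  have hZ := mul_sum_distToKer_le_hammingNorm_vec hsoundZ A
  refine one_div_mul_mul_div_mul_div_le_div (by positivity) (by positivity) (by positivity)
    (by positivity) (e := ∑ j, (distToKer HZ (A j) : ℝ) + hammingNorm (H * A + B * HX).vec)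
    (by exact_mod_cast distToKer_d2T_sum_elim_vec_le HX HZ H hchain hHK hK A B) ?_
  push_cast
  nlinarith [hZ, min_le_right ((nZ : ℝ) * ρZ / n) 1]
end

section
/- With the same product chain complex, suppose the code with parity-check matrix H_X : F_2^n → F_2^{n_X} has soundness ρ_X and H : F_2^t → F_2^s has linearly independent rows. Then the code with parity-check matrix ∂_1 : (F_2^n ⊗ F_2^t) ⊕ (F_2^{n_X} ⊗ F_2^s) → F_2^{n_X} ⊗ F_2^t, given by ∂_1(α, β) = (H_X ⊗ I)(α) + (I ⊗ Hᵀ)(β), has soundness at least (1/t)·min(n_X ρ_X / n, 1)·(nt + n_X s)/(n_X t). -/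
/-!
Write a 1-chain `x` as a pair of matrices `(A, B)`, so that `∂₁ x = H_X A + B H =: E`. Independence
of the rows of `H` gives `s` columns `g` of `H` forming an invertible block `M`. With
`C = E_g M⁻¹`, the matrix `E - C H` vanishes on the columns `g` and equals
`H_X (A - A_g M⁻¹ H)`, so soundness of `H_X` corrects it column by column with a matrix `U` of
weight at most `|E - C H| / min(n_X ρ_X / n, 1)`, and `x - (U, C) ∈ ker ∂₁`. The count is done row
by row: a row of `E` vanishing on `g` gives a zero row of `C` and is unchanged in `E - C H`, while
any other row has weight at least one and contributes at most `(t - s) + s = t` entries to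
`E - C H` and `C`. Hence `min(n_X ρ_X / n, 1) · d(x, ker ∂₁) ≤ t · |∂₁ x|`.
-/

open Matrix

/-- The boundary map `∂₁ : C₁ → C₀` of the homological product of the CSS chain complex
`(H_Zᵀ, H_X)` with the cocomplex of the classical code `H`, written as a matrix:
`∂₁(α, β) = (H_X ⊗ I) α + (I ⊗ Hᵀ) β`. -/
def d1 {Q X S T : Type*} (HX : Matrix X Q (ZMod 2))
    (H : Matrix S T (ZMod 2)) [DecidableEq T] [DecidableEq X] :
    Matrix (X × T) ((Q × T) ⊕ (X × S)) (ZMod 2) :=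
  Matrix.of fun rj c =>
    match rj, c with
    | (r, j), Sum.inl (p, j') => if j = j' then HX r p else 0
    | (r, j), Sum.inr (r', q) => if r = r' then H q j else 0

open Function Fintype

section Hamming

variable {ι κ R : Type*} [Fintype ι] [Fintype κ] [Zero R] [DecidableEq R]

theorem hammingNorm_uncurry (M : Matrix ι κ R) :
    hammingNorm (uncurry M) = ∑ i, hammingNorm (M i) := by
  simp only [hammingNorm, Finset.card_filter, Fintype.sum_prod_type]
  rfl

theorem hammingNorm_uncurry_eq_sum_col (M : Matrix ι κ R) :
    hammingNorm (uncurry M) = ∑ j, hammingNorm fun i => M i j := by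
  rw [hammingNorm_uncurry]
  simp only [hammingNorm, Finset.card_filter]
  exact Finset.sum_comm

theorem hammingNorm_sumElim (f : ι → R) (g : κ → R) :
    hammingNorm (Sum.elim f g) = hammingNorm f + hammingNorm g := by
  simp only [hammingNorm, Finset.card_filter, Fintype.sum_sum_type, Sum.elim_inl, Sum.elim_inr]
  rfl

theorem hammingNorm_le_card_sub_of_comp_eq_zero {g : ι → κ} (hg : Injective g) {v : κ → R}
    (hv : v ∘ g = 0) : hammingNorm v ≤ card κ - card ι := by
  classical
  calc hammingNorm v ≤ (Finset.univ.map ⟨g, hg⟩)ᶜ.card := by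
        refine Finset.card_le_card fun j hj => ?_
        simp only [Finset.mem_filter, Finset.mem_univ, true_and] at hj
        simp only [Finset.mem_compl, Finset.mem_map, Finset.mem_univ, true_and,
          Embedding.coeFn_mk, not_exists]
        rintro i rfl
        exact hj (congrFun hv i)
    _ = card κ - card ι := by rw [Finset.card_compl, Finset.card_map, Finset.card_univ]

theorem hammingNorm_add_hammingNorm_le_card_mul {g : ι → κ} (hg : Injective g) {e e' : κ → R}
    {b : ι → R} (he' : e' ∘ g = 0) (hb : e ∘ g = 0 → b = 0 ∧ e' = e) :
    hammingNorm e' + hammingNorm b ≤ card κ * hammingNorm e := by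
  by_cases he : e ∘ g = 0
  · obtain ⟨rfl, rfl⟩ := hb he
    rw [hammingNorm_zero, add_zero]
    rcases Nat.eq_zero_or_pos (hammingNorm e') with h | h
    · simp [h]
    · exact Nat.le_mul_of_pos_left _ (h.trans_le hammingNorm_le_card_fintype)
  · have hpos : 0 < hammingNorm e := hammingNorm_pos_iff.mpr fun h => he (by simp [h])
    calc hammingNorm e' + hammingNorm b ≤ (card κ - card ι) + card ι :=
          add_le_add (hammingNorm_le_card_sub_of_comp_eq_zero hg he') hammingNorm_le_card_fintype
      _ = card κ := Nat.sub_add_cancel (card_le_of_injective g hg)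
      _ ≤ card κ * hammingNorm e := Nat.le_mul_of_pos_right _ hpos

end Hamming

theorem exists_injective_isUnit_submatrix {K S T : Type*} [Field K] [Fintype S] [DecidableEq S]
    [Fintype T] (H : Matrix S T K) (hind : LinearIndependent K H) :
    ∃ g : S → T, Injective g ∧ IsUnit (H.submatrix id g) := by
  obtain ⟨κ, a, ha, hspan, hli⟩ := exists_linearIndependent' K H.col
  have hspan_top : Submodule.span K (Set.range (H.col ∘ a)) = ⊤ := by
    rw [hspan]
    apply Submodule.eq_top_of_finrank_eq
    rw [← rank_eq_finrank_span_cols, hind.rank_matrix, Module.finrank_fintype_fun_eq_card]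
  have : Fintype κ := Fintype.ofInjective a ha
  have hcard : card κ = card S := by
    rw [linearIndependent_iff_card_eq_finrank_span.mp hli, Set.finrank, hspan_top, finrank_top,
      Module.finrank_fintype_fun_eq_card]
  let e : S ≃ κ := Fintype.equivOfCardEq hcard.symm
  refine ⟨a ∘ e, ha.comp e.injective, ?_⟩
  rw [← linearIndependent_cols_iff_isUnit]
  exact hli.comp e e.injective

section Correction

variable {Q X S T R : Type*} [Fintype Q] [Fintype S] [DecidableEq S] [CommRing R]
  {H : Matrix S T R} {g : S → T}

theorem submatrix_sub_mul_inv_mul_eq_zero (hM : IsUnit (H.submatrix id g)) (E : Matrix X T R) :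
    (E - E.submatrix id g * (H.submatrix id g)⁻¹ * H).submatrix id g = 0 := by
  change E.submatrix id g - E.submatrix id g * (H.submatrix id g)⁻¹ * H.submatrix id g = 0
  rw [Matrix.mul_assoc, nonsing_inv_mul _ ((isUnit_iff_isUnit_det _).mp hM), Matrix.mul_one,
    sub_self]

theorem mul_add_mul_sub_eq_mul (hM : IsUnit (H.submatrix id g)) (HX : Matrix X Q R)
    (A : Matrix Q T R) (B : Matrix X S R) :
    HX * A + B * H - (HX * A + B * H).submatrix id g * (H.submatrix id g)⁻¹ * H =
      HX * (A - A.submatrix id g * (H.submatrix id g)⁻¹ * H) := by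
  have hEg : (HX * A + B * H).submatrix id g = HX * A.submatrix id g + B * H.submatrix id g := rfl
  rw [hEg, Matrix.add_mul, Matrix.add_mul, Matrix.mul_assoc B,
    mul_nonsing_inv _ ((isUnit_iff_isUnit_det _).mp hM), Matrix.mul_one, Matrix.mul_sub,
    Matrix.mul_assoc HX, Matrix.mul_assoc HX]
  abel

end Correction

section DistToKer

variable {α β : Type*} [Fintype α] [Fintype β] (M : Matrix β α (ZMod 2))

theorem distToKer_le_hammingNorm {x δ : α → ZMod 2} (h : M *ᵥ (x - δ) = 0) :
    distToKer M x ≤ hammingNorm δ :=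
  Nat.sInf_le ⟨x - δ, h, by rw [hammingDist_comm, hammingDist_eq_hammingNorm, neg_add_eq_sub,
    sub_sub_cancel]⟩

theorem exists_mulVec_eq_hammingNorm_eq_distToKer (v : α → ZMod 2) :
    ∃ u, M *ᵥ u = M *ᵥ v ∧ hammingNorm u = distToKer M v := by
  obtain ⟨k, hk, hkd⟩ := Nat.sInf_mem
    (⟨_, 0, by simp, rfl⟩ : (hammingDist v '' {y | M *ᵥ y = 0}).Nonempty)
  refine ⟨v - k, by rw [mulVec_sub, hk, sub_zero], ?_⟩
  rw [distToKer, ← hkd, hammingDist_comm, hammingDist_eq_hammingNorm, neg_add_eq_sub]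

theorem exists_mul_eq_of_soundness {T : Type*} [Fintype T] {c : ℝ}
    (hsound : ∀ u, c * distToKer M u ≤ hammingNorm (M *ᵥ u)) (V : Matrix α T (ZMod 2)) :
    ∃ U : Matrix α T (ZMod 2), M * U = M * V ∧
      c * hammingNorm (uncurry U) ≤ hammingNorm (uncurry (M * V)) := by
  choose u hu hnorm using fun j => exists_mulVec_eq_hammingNorm_eq_distToKer M fun i => V i j
  refine ⟨of fun i j => u j i, ?_, ?_⟩
  · ext r j
    exact congrFun (hu j) r
  · rw [hammingNorm_uncurry_eq_sum_col, hammingNorm_uncurry_eq_sum_col]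
    push_cast
    rw [Finset.mul_sum]
    gcongr with j
    change c * (hammingNorm (u j) : ℝ) ≤ hammingNorm (M *ᵥ fun i => V i j)
    rw [hnorm j]
    exact hsound _

end DistToKer

section HomologicalProduct

variable {Q X S T : Type*} [Fintype Q] [Fintype X] [Fintype S] [Fintype T] [DecidableEq T]
  [DecidableEq X] (HX : Matrix X Q (ZMod 2)) (H : Matrix S T (ZMod 2))

theorem d1_mulVec_sumElim (A : Matrix Q T (ZMod 2)) (B : Matrix X S (ZMod 2)) :
    d1 HX H *ᵥ Sum.elim (uncurry A) (uncurry B) = uncurry (HX * A + B * H) := by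
  ext ⟨r, j⟩
  change _ = (HX * A + B * H) r j
  simp [d1, mulVec, dotProduct, Fintype.sum_sum_type, Fintype.sum_prod_type, mul_apply, mul_comm]
  rfl

theorem mul_distToKer_d1_le_card_mul [DecidableEq S] {c : ℝ} (hc : c ≤ 1)
    (hsound : ∀ u, c * distToKer HX u ≤ hammingNorm (HX *ᵥ u)) {g : S → T} (hg : Injective g)
    (hM : IsUnit (H.submatrix id g)) (x : (Q × T) ⊕ (X × S) → ZMod 2) :
    c * distToKer (d1 HX H) x ≤ card T * hammingNorm (d1 HX H *ᵥ x) := by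
  rcases le_or_gt c 0 with hc0 | hc0
  · exact (mul_nonpos_of_nonpos_of_nonneg hc0 (Nat.cast_nonneg _)).trans (by positivity)
  set A : Matrix Q T (ZMod 2) := of (curry (x ∘ Sum.inl))
  set B : Matrix X S (ZMod 2) := of (curry (x ∘ Sum.inr))
  set E := HX * A + B * H
  set C := E.submatrix id g * (H.submatrix id g)⁻¹
  have hEx : d1 HX H *ᵥ x = uncurry E := by
    rw [← d1_mulVec_sumElim]
    exact congrArg _ (Sum.elim_comp_inl_inr x).symm
  obtain ⟨U, hU, hUE⟩ := exists_mul_eq_of_soundness HX hsound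
    (A - A.submatrix id g * (H.submatrix id g)⁻¹ * H)
  rw [← mul_add_mul_sub_eq_mul hM] at hU hUE
  have hker : d1 HX H *ᵥ (x - Sum.elim (uncurry U) (uncurry C)) = 0 := by
    rw [mulVec_sub, hEx, d1_mulVec_sumElim, hU, sub_add_cancel, sub_self]
  have hrows : hammingNorm (uncurry (E - C * H)) + hammingNorm (uncurry C) ≤
      card T * hammingNorm (uncurry E) := by
    rw [hammingNorm_uncurry, hammingNorm_uncurry, hammingNorm_uncurry, ← Finset.sum_add_distrib,
      Finset.mul_sum]
    refine Finset.sum_le_sum fun r _ => hammingNorm_add_hammingNorm_le_card_mul hg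
      (congrFun (submatrix_sub_mul_inv_mul_eq_zero hM E) r) fun hEr => ?_
    have hCr : C r = 0 := by
      change (E r ∘ g) ᵥ* _ = 0
      rw [hEr, zero_vecMul]
    refine ⟨hCr, ?_⟩
    change E r - C r ᵥ* H = E r
    rw [hCr, zero_vecMul, sub_zero]
  calc c * distToKer (d1 HX H) x
      ≤ c * hammingNorm (Sum.elim (uncurry U) (uncurry C)) := by
        gcongr
        exact distToKer_le_hammingNorm _ hker
    _ = c * hammingNorm (uncurry U) + c * hammingNorm (uncurry C) := by
        rw [hammingNorm_sumElim]
        push_cast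
        ring
    _ ≤ hammingNorm (uncurry (E - C * H)) + hammingNorm (uncurry C) :=
        add_le_add hUE (mul_le_of_le_one_left (Nat.cast_nonneg _) hc)
    _ ≤ card T * hammingNorm (d1 HX H *ᵥ x) := by
        rw [hEx]
        exact_mod_cast hrows

end HomologicalProduct

theorem stmt10_general (n nX s t : ℕ)
    (HX : Matrix (Fin nX) (Fin n) (ZMod 2))
    (H : Matrix (Fin s) (Fin t) (ZMod 2))
    (hind : LinearIndependent (ZMod 2) (fun i : Fin s => H i))
    (ρX : ℝ)
    (hsound : ∀ u : Fin n → ZMod 2,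
      (hammingNorm (HX.mulVec u) : ℝ) / nX ≥ ρX * (distToKer HX u : ℝ) / n) :
    ∀ x : (Fin n × Fin t) ⊕ (Fin nX × Fin s) → ZMod 2,
      (hammingNorm ((d1 HX H).mulVec x) : ℝ) / ((nX * t : ℕ) : ℝ) ≥
        (1 / (t : ℝ) * min ((nX : ℝ) * ρX / n) 1 *
            (((n * t + nX * s : ℕ) : ℝ) / ((nX * t : ℕ) : ℝ))) *
          (distToKer (d1 HX H) x : ℝ) / ((n * t + nX * s : ℕ) : ℝ) := by
  intro x
  obtain ⟨g, hg, hM⟩ := exists_injective_isUnit_submatrix H hind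
  set m := min ((nX : ℝ) * ρX / n) 1
  have hsound_scaled : ∀ u, (nX : ℝ) * ρX / n * distToKer HX u ≤ hammingNorm (HX *ᵥ u) := by
    intro u
    rcases eq_or_ne (nX : ℝ) 0 with h | h
    · simp [h]
    · have := hsound u
      rw [ge_iff_le, le_div_iff₀ (by positivity)] at this
      exact (le_of_eq (by ring)).trans this
  have key := mul_distToKer_d1_le_card_mul HX H (min_le_right _ 1)
    (fun u => (mul_le_mul_of_nonneg_right (min_le_left _ 1) (Nat.cast_nonneg _)).trans
      (hsound_scaled u)) hg hM x
  rw [Fintype.card_fin] at key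
  set N : ℝ := ((n * t + nX * s : ℕ) : ℝ)
  rw [ge_iff_le, show 1 / (t : ℝ) * m * (N / ((nX * t : ℕ) : ℝ)) * distToKer (d1 HX H) x / N =
    m * distToKer (d1 HX H) x / t / ((nX * t : ℕ) : ℝ) * (N / N) by ring]
  rcases eq_or_ne N 0 with hN | hN
  · simp only [hN, div_zero, mul_zero]
    positivity
  · rw [div_self hN, mul_one]
    gcongr
    exact div_le_of_le_mul₀ (by positivity) (by positivity) (by linarith)

/-- Lemma 4 (soundness of the Z-operators): if `H_X` has soundness `ρ_X` and the classical
parity-check matrix `H` has independent checks, then the code with parity-check matrix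
`∂₁` has soundness at least `(1/t) · min(n_X ρ_X / n, 1) · (nt + n_X s)/(n_X t)`. -/
theorem stmt10 (n nX nZ s t : ℕ)
    (HX : Matrix (Fin nX) (Fin n) (ZMod 2)) (HZ : Matrix (Fin nZ) (Fin n) (ZMod 2))
    (H : Matrix (Fin s) (Fin t) (ZMod 2))
    (hchain : HX * HZ.transpose = 0)
    (hind : LinearIndependent (ZMod 2) (fun i : Fin s => H i))
    (ρX : ℝ)
    (hsound : ∀ u : Fin n → ZMod 2,
      (hammingNorm (HX.mulVec u) : ℝ) / nX ≥ ρX * (distToKer HX u : ℝ) / n) :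
    ∀ x : (Fin n × Fin t) ⊕ (Fin nX × Fin s) → ZMod 2,
      (hammingNorm ((d1 HX H).mulVec x) : ℝ) / ((nX * t : ℕ) : ℝ) ≥
        (1 / (t : ℝ) * min ((nX : ℝ) * ρX / n) 1 *
            (((n * t + nX * s : ℕ) : ℝ) / ((nX * t : ℕ) : ℝ))) *
          (distToKer (d1 HX H) x : ℝ) / ((n * t + nX * s : ℕ) : ℝ) :=
  stmt10_general n nX s t HX H hind ρX hsound
end
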